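/- Let M ∈ ℝ^{d×d} be (κ,γ)-strongly stable and let K ∈ ℝ^{k×d} with ‖K‖ ≤ κ. Let Q ∈ ℝ^{d×d} and R ∈ ℝ^{k×k} be symmetric positive semidefinite with ‖Q‖ ≤ α₁ and ‖R‖ ≤ α₁. If P is a symmetric positive semidefinite matrix satisfying the Lyapunov equation P = Q + KᵀRK + MᵀPM, then ‖P‖ ≤ 2α₁κ⁴/γ, where ‖·‖ denotes the operator (spectral) norm. -/
import Mathlib


noncomputable section

/-- The operator (spectral) norm of a real matrix: the operator norm of the induced
linear map between Euclidean spaces. -/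
def opNorm {m n : ℕ} (A : Matrix (Fin m) (Fin n) ℝ) : ℝ :=
  ‖LinearMap.toContinuousLinearMap (Matrix.toEuclideanLin A)‖

/-- Euclidean norm of a vector in `ℝ^d`. -/
def vnorm {d : ℕ} (x : Fin d → ℝ) : ℝ := Real.sqrt (∑ i, x i ^ 2)

/-- A matrix `M` is `(κ,γ)`-strongly stable (for `κ ≥ 1` and `0 < γ ≤ 1`) if
`M = H L H⁻¹` for some invertible `H` and some `L` with `‖L‖ ≤ 1 − γ` and
`‖H‖·‖H⁻¹‖ ≤ κ`, where `‖·‖` is the operator (spectral) norm. -/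
def StronglyStable {d : ℕ} (κ γ : ℝ) (M : Matrix (Fin d) (Fin d) ℝ) : Prop :=
  1 ≤ κ ∧ 0 < γ ∧ γ ≤ 1 ∧
    ∃ H L : Matrix (Fin d) (Fin d) ℝ, IsUnit H ∧ M = H * L * H⁻¹ ∧
      opNorm L ≤ 1 - γ ∧ opNorm H * opNorm H⁻¹ ≤ κ


open Matrix

open scoped Matrix.Norms.L2Operator

lemma opNorm_eq_norm {m n : ℕ} (A : Matrix (Fin m) (Fin n) ℝ) : opNorm A = ‖A‖ := rfl

lemma norm_one_le (d : ℕ) : ‖(1 : Matrix (Fin d) (Fin d) ℝ)‖ ≤ 1 := by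
  have h1 : ‖(1 : Matrix (Fin d) (Fin d) ℝ)‖
      = ‖toEuclideanCLM (𝕜 := ℝ) (1 : Matrix (Fin d) (Fin d) ℝ)‖ := rfl
  rw [h1, _root_.map_one]
  exact ContinuousLinearMap.norm_id_le

lemma norm_transpose {d e : ℕ} (A : Matrix (Fin d) (Fin e) ℝ) : ‖Aᵀ‖ = ‖A‖ := by
  rw [← conjTranspose_eq_transpose_of_trivial, l2_opNorm_conjTranspose]

lemma matNorm_pow_le {d : ℕ} (A : Matrix (Fin d) (Fin d) ℝ) (s : ℕ) : ‖A ^ s‖ ≤ ‖A‖ ^ s := by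
  induction s with
  | zero => rw [pow_zero, pow_zero]; exact norm_one_le d
  | succ n ih =>
      calc ‖A ^ (n + 1)‖ = ‖A ^ n * A‖ := by rw [pow_succ]
        _ ≤ ‖A ^ n‖ * ‖A‖ := l2_opNorm_mul _ _
        _ ≤ ‖A‖ ^ n * ‖A‖ := by
            exact mul_le_mul_of_nonneg_right ih (norm_nonneg _)
        _ = ‖A‖ ^ (n + 1) := by rw [pow_succ]

/-- **Lemma (norm bound on the Lyapunov solution).**
Let `M ∈ ℝ^{d×d}` be `(κ,γ)`-strongly stable, `K ∈ ℝ^{k×d}` with `‖K‖ ≤ κ`, and let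
`Q, R` be symmetric positive semidefinite with `‖Q‖ ≤ α₁`, `‖R‖ ≤ α₁`.  If the
positive semidefinite matrix `P` satisfies the Lyapunov equation
`P = Q + KᵀRK + MᵀPM`, then `‖P‖ ≤ 2α₁κ⁴/γ` (operator norms). -/
theorem lyapunov_solution_norm_bound (d k : ℕ) (κ γ α₁ : ℝ)
    (M : Matrix (Fin d) (Fin d) ℝ) (hM : StronglyStable κ γ M)
    (K : Matrix (Fin k) (Fin d) ℝ) (hK : opNorm K ≤ κ)
    (Q : Matrix (Fin d) (Fin d) ℝ) (R : Matrix (Fin k) (Fin k) ℝ)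
    (hQ : Q.PosSemidef) (hR : R.PosSemidef)
    (hQn : opNorm Q ≤ α₁) (hRn : opNorm R ≤ α₁)
    (P : Matrix (Fin d) (Fin d) ℝ) (hP : P.PosSemidef)
    (hLyap : P = Q + Kᵀ * R * K + Mᵀ * P * M) :
    opNorm P ≤ 2 * α₁ * κ ^ 4 / γ := by
  obtain ⟨hκ, hγ, hγ1, H, L, hH, hMdef, hL, hHn⟩ := hM
  simp only [opNorm_eq_norm] at *
  set C : Matrix (Fin d) (Fin d) ℝ := Q + Kᵀ * R * K with hC
  -- basic positivity facts
  have hα : 0 ≤ α₁ := le_trans (norm_nonneg Q) hQn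
  have hκ0 : (0:ℝ) < κ := lt_of_lt_of_le zero_lt_one hκ
  have h1γ : 0 ≤ 1 - γ := by linarith
  have h1γlt : 1 - γ < 1 := by linarith
  -- bound on ‖C‖
  have hCn : ‖C‖ ≤ 2 * α₁ * κ ^ 2 := by
    have h1 : ‖Kᵀ * R * K‖ ≤ κ * α₁ * κ := by
      calc ‖Kᵀ * R * K‖ ≤ ‖Kᵀ * R‖ * ‖K‖ := l2_opNorm_mul _ _
        _ ≤ (‖Kᵀ‖ * ‖R‖) * ‖K‖ :=
            mul_le_mul_of_nonneg_right (l2_opNorm_mul _ _) (norm_nonneg _)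
        _ ≤ (κ * α₁) * κ := by
            have hKt : ‖Kᵀ‖ ≤ κ := by rw [norm_transpose]; exact hK
            have := mul_le_mul (mul_le_mul hKt hRn (norm_nonneg _) (le_of_lt hκ0))
              hK (norm_nonneg _) (by positivity)
            linarith
        _ = κ * α₁ * κ := rfl
    have h2 : ‖C‖ ≤ ‖Q‖ + ‖Kᵀ * R * K‖ := norm_add_le _ _
    have hκ2 : 1 ≤ κ ^ 2 := one_le_pow₀ hκ
    nlinarith [norm_nonneg Q]
  -- powers of M
  have hMpow : ∀ s : ℕ, M ^ s = H * L ^ s * H⁻¹ := by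
    intro s
    have hHH : H * H⁻¹ = 1 := mul_nonsing_inv H ((isUnit_iff_isUnit_det H).mp hH)
    have hHH' : H⁻¹ * H = 1 := nonsing_inv_mul H ((isUnit_iff_isUnit_det H).mp hH)
    induction s with
    | zero => simp [hHH]
    | succ n ih =>
        rw [pow_succ, ih, hMdef, pow_succ]
        calc H * L ^ n * H⁻¹ * (H * L * H⁻¹) = H * L ^ n * (H⁻¹ * H) * L * H⁻¹ := by
              noncomm_ring
          _ = H * (L ^ n * L) * H⁻¹ := by rw [hHH']; noncomm_ring
  have hMn : ∀ s : ℕ, ‖M ^ s‖ ≤ κ * (1 - γ) ^ s := by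
    intro s
    rw [hMpow s]
    calc ‖H * L ^ s * H⁻¹‖ ≤ ‖H * L ^ s‖ * ‖H⁻¹‖ := l2_opNorm_mul _ _
      _ ≤ ‖H‖ * ‖L ^ s‖ * ‖H⁻¹‖ :=
          mul_le_mul_of_nonneg_right (l2_opNorm_mul _ _) (norm_nonneg _)
      _ = ‖H‖ * ‖H⁻¹‖ * ‖L ^ s‖ := by ring
      _ ≤ κ * (1 - γ) ^ s := by
          have h1 : ‖L ^ s‖ ≤ (1 - γ) ^ s :=
            le_trans (matNorm_pow_le L s) (pow_le_pow_left₀ (norm_nonneg _) hL s)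
          have h2 : (0:ℝ) ≤ ‖H‖ * ‖H⁻¹‖ := by positivity
          exact mul_le_mul hHn h1 (norm_nonneg _) (le_of_lt hκ0)
  -- unrolled Lyapunov equation
  have hkey : ∀ N : ℕ,
      P = (∑ s ∈ Finset.range N, (M ^ s)ᵀ * C * (M ^ s)) + (M ^ N)ᵀ * P * (M ^ N) := by
    intro N
    induction N with
    | zero => simp
    | succ n ih =>
        rw [Finset.sum_range_succ]
        have hstep : (M ^ n)ᵀ * P * (M ^ n)
            = (M ^ n)ᵀ * C * (M ^ n) + (M ^ (n+1))ᵀ * P * (M ^ (n+1)) := by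
          conv_lhs => rw [hLyap]
          rw [pow_succ', transpose_mul]
          noncomm_ring
        rw [add_assoc, ← hstep]
        exact ih
  -- norm bound for each N
  have hbound : ∀ N : ℕ, ‖P‖ ≤ 2 * α₁ * κ ^ 4 / γ + κ ^ 2 * ((1 - γ) ^ 2) ^ N * ‖P‖ := by
    intro N
    have hterm : ∀ s : ℕ, ∀ A : Matrix (Fin d) (Fin d) ℝ,
        ‖(M ^ s)ᵀ * A * (M ^ s)‖ ≤ κ ^ 2 * ((1 - γ) ^ 2) ^ s * ‖A‖ := by
      intro s A
      have h1 : ‖(M ^ s)ᵀ * A * (M ^ s)‖ ≤ ‖(M ^ s)ᵀ‖ * ‖A‖ * ‖M ^ s‖ :=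
        le_trans (l2_opNorm_mul _ _)
          (mul_le_mul_of_nonneg_right (l2_opNorm_mul _ _) (norm_nonneg _))
      rw [norm_transpose] at h1
      have h2 := hMn s
      have h3 : (0:ℝ) ≤ ‖M ^ s‖ := norm_nonneg _
      have h4 : ‖M ^ s‖ * ‖M ^ s‖ ≤ κ ^ 2 * ((1 - γ) ^ 2) ^ s := by
        have h5 := mul_le_mul h2 h2 h3 (by positivity : (0:ℝ) ≤ κ * (1-γ)^s)
        have h6 : κ * (1 - γ) ^ s * (κ * (1 - γ) ^ s) = κ ^ 2 * ((1 - γ) ^ 2) ^ s := by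
          rw [← pow_mul, two_mul, pow_add]; ring
        linarith
      calc ‖(M ^ s)ᵀ * A * (M ^ s)‖ ≤ ‖M ^ s‖ * ‖A‖ * ‖M ^ s‖ := h1
        _ = ‖M ^ s‖ * ‖M ^ s‖ * ‖A‖ := by ring
        _ ≤ κ ^ 2 * ((1 - γ) ^ 2) ^ s * ‖A‖ :=
            mul_le_mul_of_nonneg_right h4 (norm_nonneg A)
    have hsum : ‖∑ s ∈ Finset.range N, (M ^ s)ᵀ * C * (M ^ s)‖
        ≤ ∑ s ∈ Finset.range N, κ ^ 2 * ((1 - γ) ^ 2) ^ s * ‖C‖ :=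
      le_trans (norm_sum_le _ _) (Finset.sum_le_sum fun s _ => hterm s C)
    have hgeom : ∑ s ∈ Finset.range N, ((1 - γ) ^ 2) ^ s ≤ 1 / γ := by
      have hr : (1 - γ) ^ 2 < 1 := by nlinarith
      have hr0 : (0:ℝ) ≤ (1 - γ) ^ 2 := sq_nonneg _
      have hne : (1 - γ) ^ 2 ≠ 1 := ne_of_lt hr
      rw [geom_sum_eq hne N]
      have hpos : (0:ℝ) < 1 - (1 - γ) ^ 2 := by linarith
      have h7 : ((1 - γ) ^ 2) ^ N - 1 ≤ 0 := by
        have : ((1 - γ) ^ 2) ^ N ≤ 1 := pow_le_one₀ hr0 (le_of_lt hr)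
        linarith
      have h8 : (((1 - γ) ^ 2) ^ N - 1) / ((1 - γ) ^ 2 - 1)
          = (1 - ((1 - γ) ^ 2) ^ N) / (1 - (1 - γ) ^ 2) := by
        rw [div_eq_div_iff (by linarith) (by linarith)]; ring
      rw [h8]
      calc (1 - ((1 - γ) ^ 2) ^ N) / (1 - (1 - γ) ^ 2)
          ≤ 1 / (1 - (1 - γ) ^ 2) := by
            rw [div_le_div_iff₀ hpos hpos]
            nlinarith [pow_nonneg hr0 N]
        _ ≤ 1 / γ := by
            apply one_div_le_one_div_of_le hγ
            nlinarith
    have hfin : ∑ s ∈ Finset.range N, κ ^ 2 * ((1 - γ) ^ 2) ^ s * ‖C‖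
        ≤ 2 * α₁ * κ ^ 4 / γ := by
      have heq : ∑ s ∈ Finset.range N, κ ^ 2 * ((1 - γ) ^ 2) ^ s * ‖C‖
          = κ ^ 2 * ‖C‖ * ∑ s ∈ Finset.range N, ((1 - γ) ^ 2) ^ s := by
        rw [Finset.mul_sum]; apply Finset.sum_congr rfl; intro s _; ring
      rw [heq]
      have hC0 : (0:ℝ) ≤ ‖C‖ := norm_nonneg _
      have hs0 : (0:ℝ) ≤ ∑ s ∈ Finset.range N, ((1 - γ) ^ 2) ^ s :=
        Finset.sum_nonneg fun s _ => pow_nonneg (sq_nonneg _) s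
      calc κ ^ 2 * ‖C‖ * ∑ s ∈ Finset.range N, ((1 - γ) ^ 2) ^ s
          ≤ κ ^ 2 * (2 * α₁ * κ ^ 2) * (1 / γ) := by
            apply mul_le_mul
            · exact mul_le_mul_of_nonneg_left hCn (by positivity)
            · exact hgeom
            · exact hs0
            · positivity
        _ = 2 * α₁ * κ ^ 4 / γ := by field_simp
    calc ‖P‖ ≤ ‖∑ s ∈ Finset.range N, (M ^ s)ᵀ * C * (M ^ s)‖ + ‖(M ^ N)ᵀ * P * (M ^ N)‖ := by
          conv_lhs => rw [hkey N]
          exact norm_add_le _ _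
      _ ≤ 2 * α₁ * κ ^ 4 / γ + κ ^ 2 * ((1 - γ) ^ 2) ^ N * ‖P‖ :=
          add_le_add (le_trans hsum hfin) (hterm N P)
  -- take the limit N → ∞
  have htend : Filter.Tendsto (fun N : ℕ => 2 * α₁ * κ ^ 4 / γ + κ ^ 2 * ((1 - γ) ^ 2) ^ N * ‖P‖)
      Filter.atTop (nhds (2 * α₁ * κ ^ 4 / γ)) := by
    have hr : |(1 - γ) ^ 2| < 1 := by
      rw [abs_of_nonneg (sq_nonneg _)]; nlinarith
    have h0 : Filter.Tendsto (fun N : ℕ => ((1 - γ) ^ 2) ^ N) Filter.atTop (nhds 0) :=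
      tendsto_pow_atTop_nhds_zero_of_abs_lt_one hr
    have h1 : Filter.Tendsto (fun N : ℕ => κ ^ 2 * ((1 - γ) ^ 2) ^ N * ‖P‖)
        Filter.atTop (nhds 0) := by
      have := (h0.const_mul (κ ^ 2)).mul_const ‖P‖
      simpa using this
    have := h1.const_add (2 * α₁ * κ ^ 4 / γ)
    simpa using this
  exact ge_of_tendsto htend (Filter.Eventually.of_forall hbound)

end
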